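/- On the domain D = {(x¹,x²,y¹,y²) ∈ ℝ⁴ : x¹ + x² ≠ 0, y¹ + y² ≠ 0, x² ≠ y¹}, consider the web function f¹ = (x¹ + y¹)/(x¹ + x²), f² = (x² + y²)/(y¹ + y²), and set σ = (x¹ + x²)/(x² − y¹), τ = (y¹ + y²)/(x² − y¹). Then the Jacobian matrices f̄ and f̃ are invertible on D, the connection coefficients are Γ¹₁₁ = σ, Γ¹₂₁ = τ, Γ²₂₁ = −σ, Γ²₂₂ = −τ, Γ¹₁₂ = Γ¹₂₂ = Γ²₁₁ = Γ²₁₂ = 0, and the curvature tensor vanishes identically: b^i_{jkl} = 0 for all i,j,k,l (so the web is a group web). -/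

import Mathlib

/-!
Everything reduces to explicit rational functions. The Jacobians `f̄`, `f̃` are triangular with
determinants `(x² - y¹)/((x¹ + x²)² (y¹ + y²))` and `(y¹ - x²)/((x¹ + x²)(y¹ + y²)²)`, and the mixed
Hessians of `f¹` and `f²` have rank one, which makes `Γ` sparse with entries `±σ`, `±τ`. The
curvature involves derivatives of `Γ`; since `Γ` agrees with these closed forms on the open set
`D`, its partial derivatives there are those of `±σ`, `±τ`, and the curvature components become
rational identities.
-/

noncomputable section

/-- Points of ℝ⁴ with coordinates (x¹, x², y¹, y²). -/
abbrev Pt : Type := ℝ × ℝ × ℝ × ℝ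

/-- Partial derivative with respect to x^j (j = 0 ↦ x¹, j = 1 ↦ x²). -/
def pdx (j : Fin 2) (F : Pt → ℝ) (p : Pt) : ℝ :=
  if j = 0 then deriv (fun t => F (t, p.2.1, p.2.2.1, p.2.2.2)) p.1
  else deriv (fun t => F (p.1, t, p.2.2.1, p.2.2.2)) p.2.1

/-- Partial derivative with respect to y^k (k = 0 ↦ y¹, k = 1 ↦ y²). -/
def pdy (k : Fin 2) (F : Pt → ℝ) (p : Pt) : ℝ :=
  if k = 0 then deriv (fun t => F (p.1, p.2.1, t, p.2.2.2)) p.2.2.1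
  else deriv (fun t => F (p.1, p.2.1, p.2.2.1, t)) p.2.2.2

/-- Jacobian matrix f̄ with entries f̄^i_j = ∂f^i/∂x^j. -/
def fbar (f : Fin 2 → Pt → ℝ) (p : Pt) : Matrix (Fin 2) (Fin 2) ℝ :=
  Matrix.of fun i j => pdx j (f i) p

/-- Jacobian matrix f̃ with entries f̃^i_k = ∂f^i/∂y^k. -/
def ftil (f : Fin 2 → Pt → ℝ) (p : Pt) : Matrix (Fin 2) (Fin 2) ℝ :=
  Matrix.of fun i k => pdy k (f i) p

/-- Connection coefficients Γ^i_{jk} = −Σ_{l,m} (∂²f^i/∂x^l∂y^m) ḡ^l_j g̃^m_k,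
where ḡ = f̄⁻¹ and g̃ = f̃⁻¹. -/
def Gam (f : Fin 2 → Pt → ℝ) (i j k : Fin 2) (p : Pt) : ℝ :=
  - ∑ l : Fin 2, ∑ m : Fin 2,
      pdy m (pdx l (f i)) p * (fbar f p)⁻¹ l j * (ftil f p)⁻¹ m k

/-- Torsion tensor a^i_{jk} = (Γ^i_{jk} − Γ^i_{kj})/2. -/
def tors (f : Fin 2 → Pt → ℝ) (i j k : Fin 2) (p : Pt) : ℝ :=
  (Gam f i j k p - Gam f i k j p) / 2

/-- Curvature tensor b^i_{jkl}. -/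
def curv (f : Fin 2 → Pt → ℝ) (i j k l : Fin 2) (p : Pt) : ℝ :=
  (1/2) * ∑ m : Fin 2,
    ( pdx m (Gam f i k l) p * (fbar f p)⁻¹ m j
    + pdx m (Gam f i j l) p * (fbar f p)⁻¹ m k
    - pdy m (Gam f i k j) p * (ftil f p)⁻¹ m l
    - pdy m (Gam f i k l) p * (ftil f p)⁻¹ m j
    + Gam f m j l p * Gam f i k m p
    - Gam f m k j p * Gam f i m l p
    + 2 * Gam f m k l p * tors f i m j p )

/-- The web function: f¹ = (x¹ + y¹)/(x¹ + x²), f² = (x² + y²)/(y¹ + y²). -/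
def w : Fin 2 → Pt → ℝ :=
  ![fun p => (p.1 + p.2.2.1) / (p.1 + p.2.1), fun p => (p.2.1 + p.2.2.2) / (p.2.2.1 + p.2.2.2)]

section PartialDerivatives

variable {F G : Pt → ℝ} {a b c d v : ℝ}

lemma pdx_zero_eq_of_hasDerivAt (h : HasDerivAt (fun t => F (t, b, c, d)) v a) :
    pdx 0 F (a, b, c, d) = v :=
  h.deriv

lemma pdx_one_eq_of_hasDerivAt (h : HasDerivAt (fun t => F (a, t, c, d)) v b) :
    pdx 1 F (a, b, c, d) = v :=
  h.deriv

lemma pdy_zero_eq_of_hasDerivAt (h : HasDerivAt (fun t => F (a, b, t, d)) v c) :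
    pdy 0 F (a, b, c, d) = v :=
  h.deriv

lemma pdy_one_eq_of_hasDerivAt (h : HasDerivAt (fun t => F (a, b, c, t)) v d) :
    pdy 1 F (a, b, c, d) = v :=
  h.deriv

lemma deriv_comp_congr_of_eqOn {U : Set Pt} (hU : IsOpen U) (h : Set.EqOn F G U) {e : ℝ → Pt}
    (he : Continuous e) {t : ℝ} (ht : e t ∈ U) :
    deriv (fun s => F (e s)) t = deriv (fun s => G (e s)) t :=
  Filter.EventuallyEq.deriv_eq <| Filter.eventually_of_mem
    (he.continuousAt.preimage_mem_nhds (hU.mem_nhds ht)) fun _ hs => h hs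

lemma pdx_congr_of_eqOn {U : Set Pt} (hU : IsOpen U) (h : Set.EqOn F G U) {p : Pt} (hp : p ∈ U)
    (j : Fin 2) : pdx j F p = pdx j G p := by
  unfold pdx
  split <;> exact deriv_comp_congr_of_eqOn hU h (by fun_prop) hp

lemma pdy_congr_of_eqOn {U : Set Pt} (hU : IsOpen U) (h : Set.EqOn F G U) {p : Pt} (hp : p ∈ U)
    (k : Fin 2) : pdy k F p = pdy k G p := by
  unfold pdy
  split <;> exact deriv_comp_congr_of_eqOn hU h (by fun_prop) hp

lemma pdx_neg (j : Fin 2) (F : Pt → ℝ) (p : Pt) : pdx j (-F) p = -pdx j F p := by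
  unfold pdx
  split <;> exact deriv.neg

lemma pdy_neg (k : Fin 2) (F : Pt → ℝ) (p : Pt) : pdy k (-F) p = -pdy k F p := by
  unfold pdy
  split <;> exact deriv.neg

lemma pdx_zero_fun (j : Fin 2) (p : Pt) : pdx j 0 p = 0 := by
  unfold pdx
  split <;> exact deriv_const _ _

lemma pdy_zero_fun (k : Fin 2) (p : Pt) : pdy k 0 p = 0 := by
  unfold pdy
  split <;> exact deriv_const _ _

end PartialDerivatives

section Web

variable {x1 x2 y1 y2 : ℝ}

lemma pdx_zero_w_zero (h1 : x1 + x2 ≠ 0) :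
    pdx 0 (w 0) (x1, x2, y1, y2) = (x2 - y1) / (x1 + x2) ^ 2 :=
  pdx_zero_eq_of_hasDerivAt <|
    (((hasDerivAt_id' x1).add_const y1).div ((hasDerivAt_id' x1).add_const x2) h1).congr_deriv
      (by ring)

lemma pdx_one_w_zero (h1 : x1 + x2 ≠ 0) :
    pdx 1 (w 0) (x1, x2, y1, y2) = -((x1 + y1) / (x1 + x2) ^ 2) :=
  pdx_one_eq_of_hasDerivAt <|
    ((hasDerivAt_const x2 (x1 + y1)).div ((hasDerivAt_id' x2).const_add x1) h1).congr_deriv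
      (by ring)

lemma pdx_zero_w_one : pdx 0 (w 1) (x1, x2, y1, y2) = 0 :=
  pdx_zero_eq_of_hasDerivAt (hasDerivAt_const x1 ((x2 + y2) / (y1 + y2)))

lemma pdx_one_w_one : pdx 1 (w 1) (x1, x2, y1, y2) = 1 / (y1 + y2) :=
  pdx_one_eq_of_hasDerivAt <| ((hasDerivAt_id' x2).add_const y2).div_const (y1 + y2)

lemma pdy_zero_w_zero : pdy 0 (w 0) (x1, x2, y1, y2) = 1 / (x1 + x2) :=
  pdy_zero_eq_of_hasDerivAt <| ((hasDerivAt_id' y1).const_add x1).div_const (x1 + x2)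

lemma pdy_one_w_zero : pdy 1 (w 0) (x1, x2, y1, y2) = 0 :=
  pdy_one_eq_of_hasDerivAt (hasDerivAt_const y2 ((x1 + y1) / (x1 + x2)))

lemma pdy_zero_w_one (h2 : y1 + y2 ≠ 0) :
    pdy 0 (w 1) (x1, x2, y1, y2) = -((x2 + y2) / (y1 + y2) ^ 2) :=
  pdy_zero_eq_of_hasDerivAt <|
    ((hasDerivAt_const y1 (x2 + y2)).div ((hasDerivAt_id' y1).add_const y2) h2).congr_deriv
      (by ring)

lemma pdy_one_w_one (h2 : y1 + y2 ≠ 0) :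
    pdy 1 (w 1) (x1, x2, y1, y2) = (y1 - x2) / (y1 + y2) ^ 2 :=
  pdy_one_eq_of_hasDerivAt <|
    (((hasDerivAt_id' y2).const_add x2).div ((hasDerivAt_id' y2).const_add y1) h2).congr_deriv
      (by ring)

lemma isOpen_setOf_add_ne_zero : IsOpen {q : Pt | q.1 + q.2.1 ≠ 0} :=
  isOpen_ne_fun (by fun_prop) continuous_const

lemma pdy_zero_pdx_w_zero (h1 : x1 + x2 ≠ 0) (l : Fin 2) :
    pdy 0 (pdx l (w 0)) (x1, x2, y1, y2) = -(1 / (x1 + x2) ^ 2) := by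
  fin_cases l
  · refine (pdy_congr_of_eqOn isOpen_setOf_add_ne_zero
      (G := fun q => (q.2.1 - q.2.2.1) / (q.1 + q.2.1) ^ 2)
      (fun ⟨_, _, _, _⟩ h => pdx_zero_w_zero h) h1 0).trans ?_
    exact pdy_zero_eq_of_hasDerivAt
      ((((hasDerivAt_id' y1).const_sub x2).div_const ((x1 + x2) ^ 2)).congr_deriv (by ring))
  · refine (pdy_congr_of_eqOn isOpen_setOf_add_ne_zero
      (G := fun q => -((q.1 + q.2.2.1) / (q.1 + q.2.1) ^ 2))
      (fun ⟨_, _, _, _⟩ h => pdx_one_w_zero h) h1 0).trans ?_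
    exact pdy_zero_eq_of_hasDerivAt
      ((((hasDerivAt_id' y1).const_add x1).div_const ((x1 + x2) ^ 2)).neg.congr_deriv (by ring))

-- `w 0` does not involve `y²`, so the function differentiated here is constant by definition.
lemma pdy_one_pdx_w_zero (l : Fin 2) : pdy 1 (pdx l (w 0)) (x1, x2, y1, y2) = 0 :=
  pdy_one_eq_of_hasDerivAt (hasDerivAt_const y2 (pdx l (w 0) (x1, x2, y1, y2)))

lemma pdy_pdx_zero_w_one (m : Fin 2) : pdy m (pdx 0 (w 1)) (x1, x2, y1, y2) = 0 := by
  rw [show pdx 0 (w 1) = 0 from funext fun _ => pdx_zero_w_one, pdy_zero_fun]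

lemma pdy_pdx_one_w_one (h2 : y1 + y2 ≠ 0) (m : Fin 2) :
    pdy m (pdx 1 (w 1)) (x1, x2, y1, y2) = -(1 / (y1 + y2) ^ 2) := by
  rw [show pdx 1 (w 1) = fun q => 1 / (q.2.2.1 + q.2.2.2) from funext fun _ => pdx_one_w_one]
  fin_cases m
  · exact pdy_zero_eq_of_hasDerivAt
      (((hasDerivAt_const y1 (1 : ℝ)).div ((hasDerivAt_id' y1).add_const y2) h2).congr_deriv
        (by ring))
  · exact pdy_one_eq_of_hasDerivAt
      (((hasDerivAt_const y2 (1 : ℝ)).div ((hasDerivAt_id' y2).const_add y1) h2).congr_deriv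
        (by ring))

lemma fbar_w (h1 : x1 + x2 ≠ 0) :
    fbar w (x1, x2, y1, y2) =
      !![(x2 - y1) / (x1 + x2) ^ 2, -((x1 + y1) / (x1 + x2) ^ 2); 0, 1 / (y1 + y2)] := by
  ext i j
  fin_cases i <;> fin_cases j
  exacts [pdx_zero_w_zero h1, pdx_one_w_zero h1, pdx_zero_w_one, pdx_one_w_one]

lemma ftil_w (h2 : y1 + y2 ≠ 0) :
    ftil w (x1, x2, y1, y2) =
      !![1 / (x1 + x2), 0; -((x2 + y2) / (y1 + y2) ^ 2), (y1 - x2) / (y1 + y2) ^ 2] := by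
  ext i j
  fin_cases i <;> fin_cases j
  exacts [pdy_zero_w_zero, pdy_one_w_zero, pdy_zero_w_one h2, pdy_one_w_one h2]

lemma fbar_w_mul (h1 : x1 + x2 ≠ 0) (h2 : y1 + y2 ≠ 0) (h3 : x2 ≠ y1) :
    fbar w (x1, x2, y1, y2) *
      !![(x1 + x2) ^ 2 / (x2 - y1), (x1 + y1) * (y1 + y2) / (x2 - y1); 0, y1 + y2] = 1 := by
  have : x2 - y1 ≠ 0 := sub_ne_zero.mpr h3
  rw [fbar_w h1, Matrix.mul_fin_two, Matrix.one_fin_two]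
  congr 1
  refine Matrix.vec2_eq (Matrix.vec2_eq ?_ ?_) (Matrix.vec2_eq ?_ ?_)
  all_goals field_simp
  all_goals ring

lemma ftil_w_mul (h1 : x1 + x2 ≠ 0) (h2 : y1 + y2 ≠ 0) (h3 : x2 ≠ y1) :
    ftil w (x1, x2, y1, y2) *
      !![x1 + x2, 0; (x1 + x2) * (x2 + y2) / (y1 - x2), (y1 + y2) ^ 2 / (y1 - x2)] = 1 := by
  have : y1 - x2 ≠ 0 := sub_ne_zero.mpr h3.symm
  rw [ftil_w h2, Matrix.mul_fin_two, Matrix.one_fin_two]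
  congr 1
  refine Matrix.vec2_eq (Matrix.vec2_eq ?_ ?_) (Matrix.vec2_eq ?_ ?_)
  all_goals field_simp
  all_goals ring

lemma fbar_w_inv (h1 : x1 + x2 ≠ 0) (h2 : y1 + y2 ≠ 0) (h3 : x2 ≠ y1) :
    (fbar w (x1, x2, y1, y2))⁻¹ =
      !![(x1 + x2) ^ 2 / (x2 - y1), (x1 + y1) * (y1 + y2) / (x2 - y1); 0, y1 + y2] :=
  Matrix.inv_eq_right_inv (fbar_w_mul h1 h2 h3)

lemma ftil_w_inv (h1 : x1 + x2 ≠ 0) (h2 : y1 + y2 ≠ 0) (h3 : x2 ≠ y1) :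
    (ftil w (x1, x2, y1, y2))⁻¹ =
      !![x1 + x2, 0; (x1 + x2) * (x2 + y2) / (y1 - x2), (y1 + y2) ^ 2 / (y1 - x2)] :=
  Matrix.inv_eq_right_inv (ftil_w_mul h1 h2 h3)

lemma isUnit_fbar_w (h1 : x1 + x2 ≠ 0) (h2 : y1 + y2 ≠ 0) (h3 : x2 ≠ y1) :
    IsUnit (fbar w (x1, x2, y1, y2)) :=
  (Matrix.isUnit_iff_isUnit_det _).2 (Matrix.isUnit_det_of_right_inverse (fbar_w_mul h1 h2 h3))

lemma isUnit_ftil_w (h1 : x1 + x2 ≠ 0) (h2 : y1 + y2 ≠ 0) (h3 : x2 ≠ y1) :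
    IsUnit (ftil w (x1, x2, y1, y2)) :=
  (Matrix.isUnit_iff_isUnit_det _).2 (Matrix.isUnit_det_of_right_inverse (ftil_w_mul h1 h2 h3))

def wσ (p : Pt) : ℝ := (p.1 + p.2.1) / (p.2.1 - p.2.2.1)

def wτ (p : Pt) : ℝ := (p.2.2.1 + p.2.2.2) / (p.2.1 - p.2.2.1)

def wΓ : Fin 2 → Fin 2 → Fin 2 → Pt → ℝ :=
  ![![![wσ, 0], ![wτ, 0]], ![![0, 0], ![-wσ, -wτ]]]

lemma Gam_w (h1 : x1 + x2 ≠ 0) (h2 : y1 + y2 ≠ 0) (h3 : x2 ≠ y1) (i j k : Fin 2) :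
    Gam w i j k (x1, x2, y1, y2) = wΓ i j k (x1, x2, y1, y2) := by
  have : x2 - y1 ≠ 0 := sub_ne_zero.mpr h3
  have : y1 - x2 ≠ 0 := sub_ne_zero.mpr h3.symm
  fin_cases i <;>
  · simp only [Fin.zero_eta, Fin.mk_one, Gam, Fin.sum_univ_two, fbar_w_inv h1 h2 h3,
      ftil_w_inv h1 h2 h3, pdy_zero_pdx_w_zero h1, pdy_one_pdx_w_zero, pdy_pdx_zero_w_one,
      pdy_pdx_one_w_one h2]
    fin_cases j <;> fin_cases k <;>
    · simp only [Fin.zero_eta, Fin.mk_one, Matrix.of_apply, Matrix.cons_val', Matrix.cons_val_zero,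
        Matrix.cons_val_one, Matrix.empty_val', Matrix.cons_val_fin_one, wΓ, wσ, wτ, Pi.neg_apply,
        Pi.zero_apply]
      field_simp
      ring

lemma pdx_zero_wσ : pdx 0 wσ (x1, x2, y1, y2) = 1 / (x2 - y1) :=
  pdx_zero_eq_of_hasDerivAt <| ((hasDerivAt_id' x1).add_const x2).div_const (x2 - y1)

lemma pdx_one_wσ (h3 : x2 ≠ y1) : pdx 1 wσ (x1, x2, y1, y2) = -((x1 + y1) / (x2 - y1) ^ 2) :=
  pdx_one_eq_of_hasDerivAt <|
    (((hasDerivAt_id' x2).const_add x1).div ((hasDerivAt_id' x2).sub_const y1)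
      (sub_ne_zero.2 h3)).congr_deriv (by ring)

lemma pdy_zero_wσ (h3 : x2 ≠ y1) : pdy 0 wσ (x1, x2, y1, y2) = (x1 + x2) / (x2 - y1) ^ 2 :=
  pdy_zero_eq_of_hasDerivAt <|
    ((hasDerivAt_const y1 (x1 + x2)).div ((hasDerivAt_id' y1).const_sub x2)
      (sub_ne_zero.2 h3)).congr_deriv (by ring)

lemma pdy_one_wσ : pdy 1 wσ (x1, x2, y1, y2) = 0 :=
  pdy_one_eq_of_hasDerivAt (hasDerivAt_const y2 (wσ (x1, x2, y1, y2)))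

lemma pdx_zero_wτ : pdx 0 wτ (x1, x2, y1, y2) = 0 :=
  pdx_zero_eq_of_hasDerivAt (hasDerivAt_const x1 (wτ (x1, x2, y1, y2)))

lemma pdx_one_wτ (h3 : x2 ≠ y1) : pdx 1 wτ (x1, x2, y1, y2) = -((y1 + y2) / (x2 - y1) ^ 2) :=
  pdx_one_eq_of_hasDerivAt <|
    ((hasDerivAt_const x2 (y1 + y2)).div ((hasDerivAt_id' x2).sub_const y1)
      (sub_ne_zero.2 h3)).congr_deriv (by ring)

lemma pdy_zero_wτ (h3 : x2 ≠ y1) : pdy 0 wτ (x1, x2, y1, y2) = (x2 + y2) / (x2 - y1) ^ 2 :=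
  pdy_zero_eq_of_hasDerivAt <|
    (((hasDerivAt_id' y1).add_const y2).div ((hasDerivAt_id' y1).const_sub x2)
      (sub_ne_zero.2 h3)).congr_deriv (by ring)

lemma pdy_one_wτ : pdy 1 wτ (x1, x2, y1, y2) = 1 / (x2 - y1) :=
  pdy_one_eq_of_hasDerivAt <| ((hasDerivAt_id' y2).const_add y1).div_const (x2 - y1)

def webDomain : Set Pt := {q | q.1 + q.2.1 ≠ 0 ∧ q.2.2.1 + q.2.2.2 ≠ 0 ∧ q.2.1 ≠ q.2.2.1}

lemma isOpen_webDomain : IsOpen webDomain :=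
  (isOpen_ne_fun (by fun_prop) continuous_const).inter <|
    (isOpen_ne_fun (by fun_prop) continuous_const).inter (isOpen_ne_fun (by fun_prop) (by fun_prop))

lemma eqOn_Gam_w (i j k : Fin 2) : Set.EqOn (Gam w i j k) (wΓ i j k) webDomain :=
  fun ⟨_, _, _, _⟩ ⟨h1, h2, h3⟩ => Gam_w h1 h2 h3 i j k

lemma pdx_Gam_w (h1 : x1 + x2 ≠ 0) (h2 : y1 + y2 ≠ 0) (h3 : x2 ≠ y1) (m i j k : Fin 2) :
    pdx m (Gam w i j k) (x1, x2, y1, y2) = pdx m (wΓ i j k) (x1, x2, y1, y2) :=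
  pdx_congr_of_eqOn isOpen_webDomain (eqOn_Gam_w i j k) ⟨h1, h2, h3⟩ m

lemma pdy_Gam_w (h1 : x1 + x2 ≠ 0) (h2 : y1 + y2 ≠ 0) (h3 : x2 ≠ y1) (m i j k : Fin 2) :
    pdy m (Gam w i j k) (x1, x2, y1, y2) = pdy m (wΓ i j k) (x1, x2, y1, y2) :=
  pdy_congr_of_eqOn isOpen_webDomain (eqOn_Gam_w i j k) ⟨h1, h2, h3⟩ m

lemma curv_w (h1 : x1 + x2 ≠ 0) (h2 : y1 + y2 ≠ 0) (h3 : x2 ≠ y1) (i j k l : Fin 2) :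
    curv w i j k l (x1, x2, y1, y2) = 0 := by
  have : x2 - y1 ≠ 0 := sub_ne_zero.mpr h3
  have : y1 - x2 ≠ 0 := sub_ne_zero.mpr h3.symm
  simp only [curv, tors, Fin.sum_univ_two, pdx_Gam_w h1 h2 h3, pdy_Gam_w h1 h2 h3,
    Gam_w h1 h2 h3, fbar_w_inv h1 h2 h3, ftil_w_inv h1 h2 h3]
  fin_cases i <;> fin_cases j <;> fin_cases k <;> fin_cases l <;>
  · simp only [Fin.zero_eta, Fin.mk_one, wΓ, Matrix.cons_val_zero, Matrix.cons_val_one,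
      pdx_neg, pdy_neg, pdx_zero_fun, pdy_zero_fun, pdx_zero_wσ,
      pdx_one_wσ h3, pdy_zero_wσ h3, pdy_one_wσ, pdx_zero_wτ, pdx_one_wτ h3, pdy_zero_wτ h3,
      pdy_one_wτ, Pi.neg_apply, Pi.zero_apply, wσ, wτ, Matrix.of_apply, Matrix.cons_val',
      Matrix.empty_val', Matrix.cons_val_fin_one]
    field_simp
    ring

end Web

theorem stmt_10 (x1 x2 y1 y2 : ℝ) (h1 : x1 + x2 ≠ 0) (h2 : y1 + y2 ≠ 0)
    (h3 : x2 ≠ y1) :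
    IsUnit (fbar w (x1, x2, y1, y2)) ∧
    IsUnit (ftil w (x1, x2, y1, y2)) ∧
    Gam w 0 0 0 (x1, x2, y1, y2) = (x1 + x2) / (x2 - y1) ∧
    Gam w 0 1 0 (x1, x2, y1, y2) = (y1 + y2) / (x2 - y1) ∧
    Gam w 1 1 0 (x1, x2, y1, y2) = -((x1 + x2) / (x2 - y1)) ∧
    Gam w 1 1 1 (x1, x2, y1, y2) = -((y1 + y2) / (x2 - y1)) ∧
    Gam w 0 0 1 (x1, x2, y1, y2) = 0 ∧
    Gam w 0 1 1 (x1, x2, y1, y2) = 0 ∧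
    Gam w 1 0 0 (x1, x2, y1, y2) = 0 ∧
    Gam w 1 0 1 (x1, x2, y1, y2) = 0 ∧
    (∀ i j k l : Fin 2, curv w i j k l (x1, x2, y1, y2) = 0) := by
  refine ⟨isUnit_fbar_w h1 h2 h3, isUnit_ftil_w h1 h2 h3, ?_, ?_, ?_, ?_, ?_, ?_, ?_, ?_,
    curv_w h1 h2 h3⟩ <;>
  exact Gam_w h1 h2 h3 _ _ _
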